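/- Deterministic version of Theorem 5: let B̂_k minimize ‖Y − XB‖_F² over all p×n matrices B of rank at most k, where Y = XA + E. Then for any θ > 0, with c(θ) = 1 + 2/θ, ‖XB̂_k − XA‖_F² ≤ c(θ)² Σ_{j>k} dⱼ²(XA) + 2(1+θ)c(θ)·k·d₁²(PE), where P is the projection onto the column space of X. -/

import Mathlib

open Matrix MeasureTheory

/-- List of singular values of a real matrix, sorted in decreasing order
(square roots of the eigenvalues of `Aᵀ * A`). -/
noncomputable def svList {m n : ℕ} (A : Matrix (Fin m) (Fin n) ℝ) : List ℝ :=
  (((List.ofFn (show (Aᵀ * A).IsHermitian by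
    rw [IsHermitian, conjTranspose_eq_transpose_of_trivial, transpose_mul, transpose_transpose]).eigenvalues).map Real.sqrt).mergeSort
    (fun a b => decide (b ≤ a)))

/-- `sv A k` is the `k`-th largest singular value of `A` (1-indexed); `0` if `k` exceeds
the number of singular values. -/
noncomputable def sv {m n : ℕ} (A : Matrix (Fin m) (Fin n) ℝ) (k : ℕ) : ℝ :=
  (svList A).getD (k - 1) 0

/-- Nuclear norm: sum of the singular values. -/
noncomputable def nuclearNorm {m n : ℕ} (A : Matrix (Fin m) (Fin n) ℝ) : ℝ :=
  (svList A).sum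

/-- Squared Frobenius norm. -/
noncomputable def frobSq {m n : ℕ} (A : Matrix (Fin m) (Fin n) ℝ) : ℝ :=
  ∑ i, ∑ j, (A i j) ^ 2

/-- Frobenius inner product. -/
noncomputable def frobInner {m n : ℕ} (C D : Matrix (Fin m) (Fin n) ℝ) : ℝ :=
  ∑ i, ∑ j, C i j * D i j

/-! Compare `B̂_k` with `B = A Π_k`, where `Π_k` projects onto the top `k` right singular
vectors of `XA`: then `XB` is a best rank-`k` approximation of `XA`, and
`‖XB - XA‖_F² = ∑_{j>k} dⱼ²(XA)`. Expanding `‖Y - XB̂_k‖_F² ≤ ‖Y - XB‖_F²` around `E` gives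
`‖XB̂_k - XA‖_F² ≤ ‖XB - XA‖_F² + 2⟨E, X(B̂_k - B)⟩`. Since `X(B̂_k - B)` lies in the range
of `X` and has rank at most `2k`, the inner product is at most
`d₁(PE) ‖X(B̂_k - B)‖₁ ≤ √(2k) d₁(PE) ‖X(B̂_k - B)‖_F`, and the triangle inequality leaves
the quadratic inequality `a² ≤ b² + 2s(a + b)` for `a = ‖XB̂_k - XA‖_F`, `b = ‖XB - XA‖_F`,
`s = √(2k) d₁(PE)`. Hence `a ≤ b + 2s`, and AM-GM splits `(b + 2s)²` with the weight `θ`. -/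

section Frobenius

variable {m n : ℕ}

theorem frobInner_eq_trace (C D : Matrix (Fin m) (Fin n) ℝ) : frobInner C D = trace (Cᵀ * D) := by
  simp only [frobInner, trace, diag, mul_apply, transpose_apply]
  exact Finset.sum_comm

theorem frobSq_eq_frobInner (C : Matrix (Fin m) (Fin n) ℝ) : frobSq C = frobInner C C := by
  simp only [frobSq, frobInner, sq]

theorem frobSq_nonneg (C : Matrix (Fin m) (Fin n) ℝ) : 0 ≤ frobSq C := by
  unfold frobSq
  positivity

theorem frobSq_sub (C D : Matrix (Fin m) (Fin n) ℝ) :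
    frobSq (C - D) = frobSq C - 2 * frobInner C D + frobSq D := by
  simp only [frobSq, frobInner, Matrix.sub_apply, sub_sq, Finset.sum_add_distrib,
    Finset.sum_sub_distrib, Finset.mul_sum, mul_assoc]

theorem frobSq_sub_comm (C D : Matrix (Fin m) (Fin n) ℝ) : frobSq (C - D) = frobSq (D - C) := by
  simp only [frobSq, Matrix.sub_apply, ← neg_sub (C _ _), neg_sq]

theorem frobInner_sub_right (C D₁ D₂ : Matrix (Fin m) (Fin n) ℝ) :
    frobInner C (D₁ - D₂) = frobInner C D₁ - frobInner C D₂ := by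
  simp only [frobInner, Matrix.sub_apply, mul_sub, Finset.sum_sub_distrib]

theorem frobInner_mul_left (P : Matrix (Fin m) (Fin m) ℝ) (C D : Matrix (Fin m) (Fin n) ℝ) :
    frobInner (P * C) D = frobInner C (Pᵀ * D) := by
  rw [frobInner_eq_trace, frobInner_eq_trace, transpose_mul, Matrix.mul_assoc]

theorem frobInner_vecMulVec (C : Matrix (Fin m) (Fin n) ℝ) (u : Fin m → ℝ) (v : Fin n → ℝ) :
    frobInner C (vecMulVec u v) = u ⬝ᵥ (C *ᵥ v) := by
  rw [frobInner_eq_trace, mul_vecMulVec, trace_vecMulVec, dotProduct_mulVec, mulVec_transpose]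

theorem frobInner_sum_smul_vecMulVec {ι : Type*} (C : Matrix (Fin m) (Fin n) ℝ) (s : Finset ι)
    (σ : ι → ℝ) (u : ι → Fin m → ℝ) (v : ι → Fin n → ℝ) :
    frobInner C (∑ i ∈ s, σ i • vecMulVec (u i) (v i)) = ∑ i ∈ s, σ i * (u i ⬝ᵥ (C *ᵥ v i)) := by
  rw [frobInner_eq_trace, Matrix.mul_sum, trace_sum]
  refine Finset.sum_congr rfl fun i _ => ?_
  rw [Matrix.mul_smul, trace_smul, ← frobInner_eq_trace, frobInner_vecMulVec, smul_eq_mul]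

section FrobeniusNorm

attribute [local instance] Matrix.frobeniusNormedAddCommGroup

theorem sqrt_frobSq_eq_norm (C : Matrix (Fin m) (Fin n) ℝ) : √(frobSq C) = ‖C‖ := by
  rw [frobenius_norm_def, Real.sqrt_eq_rpow, frobSq]
  simp only [Real.norm_eq_abs, Real.rpow_two, sq_abs]

theorem sqrt_frobSq_sub_le (C D : Matrix (Fin m) (Fin n) ℝ) :
    √(frobSq (C - D)) ≤ √(frobSq C) + √(frobSq D) := by
  simpa only [sqrt_frobSq_eq_norm] using norm_sub_le C D

end FrobeniusNorm

end Frobenius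

section Rank

variable {K m n : Type*} [Field K] [Fintype n]

theorem Matrix.rank_add_le (M N : Matrix m n K) : (M + N).rank ≤ M.rank + N.rank := by
  unfold rank
  rw [mulVecLin_add]
  exact (Submodule.finrank_mono (LinearMap.range_add_le _ _)).trans
    (Submodule.finrank_add_le_finrank_add_finrank _ _)

theorem Matrix.rank_sub_le (M N : Matrix m n K) : (M - N).rank ≤ M.rank + N.rank := by
  have h := rank_add_le M (-N)
  rwa [← sub_eq_add_neg, ← neg_one_smul K N, rank_smul_of_mem_nonZeroDivisors] at h
  simp

theorem Matrix.rank_sum_le {ι : Type*} (s : Finset ι) (M : ι → Matrix m n K) :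
    (∑ i ∈ s, M i).rank ≤ ∑ i ∈ s, (M i).rank := by
  classical
  induction s using Finset.induction_on with
  | empty => simp
  | insert i s hi ih =>
    rw [Finset.sum_insert hi, Finset.sum_insert hi]
    exact (rank_add_le _ _).trans (Nat.add_le_add_left ih _)

theorem Matrix.rank_sum_vecMulVec_le {ι : Type*} (s : Finset ι) (u : ι → m → K) (v : ι → n → K) :
    (∑ i ∈ s, vecMulVec (u i) (v i)).rank ≤ s.card :=
  (rank_sum_le s _).trans <| by
    simpa using Finset.sum_le_sum fun i _ => rank_vecMulVec_le (u i) (v i)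

end Rank

theorem exists_perm_mergeSort_ofFn_eq {n : ℕ} (f : Fin n → ℝ) :
    ∃ e : Equiv.Perm (Fin n), Antitone (f ∘ e) ∧
      (List.ofFn f).mergeSort (fun a b => decide (b ≤ a)) = List.ofFn (f ∘ e) := by
  let g : Fin n → ℝᵒᵈ := OrderDual.toDual ∘ f
  have hanti : Antitone (f ∘ Tuple.sort g) := fun _ _ hij => Tuple.monotone_sort g hij
  refine ⟨Tuple.sort g, hanti, ?_⟩
  refine List.Perm.eq_of_pairwise (le := fun a b => b ≤ a)
    (fun a b _ _ hab hba => le_antisymm hba hab) ?_ ?_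
    ((List.mergeSort_perm _ _).trans (Equiv.Perm.ofFn_comp_perm _ f).symm)
  · exact List.pairwise_mergeSort' (fun a b : ℝ => b ≤ a) _
  · exact List.pairwise_ofFn.2 fun _ _ hij => hanti hij.le

theorem sum_vecMulVec_self_eq_one {n : ℕ} (v : Fin n → Fin n → ℝ)
    (hv : ∀ i j, v i ⬝ᵥ v j = if i = j then 1 else 0) :
    ∑ i, vecMulVec (v i) (v i) = 1 := by
  have hrows : of v * (of v)ᵀ = 1 := by
    ext i j
    simpa [mul_apply, dotProduct, one_apply] using hv i j
  have hcols := mul_eq_one_comm.1 hrows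
  ext a b
  simpa [mul_apply, vecMulVec_apply, Matrix.sum_apply] using congrFun (congrFun hcols a) b

theorem Fin.sum_filter_not_lt_eq_sum_Icc {M : Type*} [AddCommMonoid M] (n k : ℕ)
    (f : ℕ → M) :
    ∑ i ∈ ({i | ¬(i : ℕ) < k} : Finset (Fin n)), f (i + 1) = ∑ j ∈ Finset.Icc (k + 1) n, f j := by
  rw [Finset.sum_filter, Fin.sum_univ_eq_sum_range (fun i => if ¬i < k then f (i + 1) else 0),
    ← Finset.sum_filter]
  have h : (Finset.range n).filter (fun i => ¬i < k) = Finset.Ico k n := by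
    ext i
    simp only [Finset.mem_filter, Finset.mem_range, Finset.mem_Ico]
    omega
  rw [h, Finset.sum_Ico_add', Finset.Ico_add_one_right_eq_Icc]

theorem Matrix.IsHermitian.dotProduct_eigenvectorBasis {n : ℕ} {M : Matrix (Fin n) (Fin n) ℝ}
    (hM : M.IsHermitian) (i j : Fin n) :
    ⇑(hM.eigenvectorBasis i) ⬝ᵥ ⇑(hM.eigenvectorBasis j) = if i = j then 1 else 0 := by
  simpa [EuclideanSpace.inner_eq_star_dotProduct, dotProduct_comm] using
    orthonormal_iff_ite.mp hM.eigenvectorBasis.orthonormal i j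

theorem mulVec_eigenvectorBasis_dotProduct_mulVec {m n : ℕ} {Z : Matrix (Fin m) (Fin n) ℝ}
    (hS : (Zᵀ * Z).IsHermitian) (i j : Fin n) :
    (Z *ᵥ ⇑(hS.eigenvectorBasis i)) ⬝ᵥ (Z *ᵥ ⇑(hS.eigenvectorBasis j)) =
      if i = j then hS.eigenvalues i else 0 := by
  rw [← vecMul_transpose, ← dotProduct_mulVec, mulVec_mulVec, hS.mulVec_eigenvectorBasis,
    dotProduct_smul, hS.dotProduct_eigenvectorBasis]
  split_ifs with h <;> simp [h]

/-- Taking `u i = 0` when `σ i = 0` spares completing the left singular vectors to an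
orthonormal family. -/
structure SVD {m n : ℕ} (Z : Matrix (Fin m) (Fin n) ℝ) where
  σ : Fin n → ℝ
  u : Fin n → Fin m → ℝ
  v : Fin n → Fin n → ℝ
  svList_eq : svList Z = List.ofFn σ
  antitone : Antitone σ
  nonneg : ∀ i, 0 ≤ σ i
  dotProduct_v : ∀ i j, v i ⬝ᵥ v j = if i = j then 1 else 0
  dotProduct_u : ∀ i j, u i ⬝ᵥ u j = if i = j ∧ σ i ≠ 0 then 1 else 0
  eq_sum : Z = ∑ i, σ i • vecMulVec (u i) (v i)
  card_filter_ne_zero_eq_rank : (Finset.univ.filter fun i => σ i ≠ 0).card = Z.rank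

theorem SVD.nonempty {m n : ℕ} (Z : Matrix (Fin m) (Fin n) ℝ) : Nonempty (SVD Z) := by
  classical
  have hS : (Zᵀ * Z).IsHermitian := by
    rw [IsHermitian, conjTranspose_eq_transpose_of_trivial, transpose_mul, transpose_transpose]
  set μ := hS.eigenvalues
  obtain ⟨e, hanti, hsort⟩ := exists_perm_mergeSort_ofFn_eq fun i => √(μ i)
  set σ : Fin n → ℝ := fun i => √(μ (e i))
  set v : Fin n → Fin n → ℝ := fun i => hS.eigenvectorBasis (e i)
  set u : Fin n → Fin m → ℝ := fun i => (σ i)⁻¹ • (Z *ᵥ v i)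
  have hμ : ∀ i, 0 ≤ μ i := eigenvalues_conjTranspose_mul_self_nonneg Z
  have hv : ∀ i j, v i ⬝ᵥ v j = if i = j then 1 else 0 := fun i j => by
    simp only [v, hS.dotProduct_eigenvectorBasis, e.injective.eq_iff]
  have hZv : ∀ i j, (Z *ᵥ v i) ⬝ᵥ (Z *ᵥ v j) = if i = j then σ i ^ 2 else 0 := fun i j => by
    simp only [v, mulVec_eigenvectorBasis_dotProduct_mulVec, e.injective.eq_iff, σ,
      Real.sq_sqrt (hμ _), μ]
  have hZv_eq : ∀ i, Z *ᵥ v i = σ i • u i := by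
    intro i
    by_cases h : σ i = 0
    · have := hZv i i
      rw [if_pos rfl, h, zero_pow two_ne_zero, dotProduct_self_eq_zero] at this
      simp [this, h]
    · simp [u, smul_smul, h]
  refine ⟨⟨σ, u, v, ?_, hanti, fun i => Real.sqrt_nonneg _, hv, ?_, ?_, ?_⟩⟩
  · rw [svList, List.map_ofFn]
    exact hsort
  · intro i j
    simp only [u, smul_dotProduct, dotProduct_smul, hZv, smul_eq_mul]
    by_cases hij : i = j
    · subst hij
      by_cases h : σ i = 0 <;> field_simp <;> simp [h]
    · simp [hij]
  · calc Z = Z * ∑ i, vecMulVec (v i) (v i) := by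
          rw [sum_vecMulVec_self_eq_one v hv, Matrix.mul_one]
      _ = ∑ i, σ i • vecMulVec (u i) (v i) := by
        simp only [Matrix.mul_sum, mul_vecMulVec, hZv_eq, smul_vecMulVec]
  · rw [← rank_transpose_mul_self, hS.rank_eq_card_non_zero_eigs, Fintype.card_subtype]
    refine Finset.card_equiv e fun i => ?_
    simp [σ, μ, Real.sqrt_eq_zero (hμ _)]

namespace SVD

variable {m n : ℕ} {Z : Matrix (Fin m) (Fin n) ℝ} (S : SVD Z)

theorem sv_succ (i : Fin n) : sv Z (i + 1) = S.σ i := by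
  rw [sv, S.svList_eq, Nat.add_sub_cancel, List.getD_eq_getElem _ _ (by simp), List.getElem_ofFn]

theorem le_sv_one (i : Fin n) : S.σ i ≤ sv Z 1 := by
  change S.σ i ≤ sv Z ((⟨0, i.pos⟩ : Fin n) + 1)
  rw [S.sv_succ]
  exact S.antitone (Nat.zero_le _)

theorem nuclearNorm_eq : nuclearNorm Z = ∑ i, S.σ i := by
  rw [nuclearNorm, S.svList_eq, List.sum_ofFn]

theorem sum_smul_vecMulVec_mulVec_v {s : Finset (Fin n)} {i : Fin n} (hi : i ∈ s) :
    (∑ j ∈ s, S.σ j • vecMulVec (S.u j) (S.v j)) *ᵥ S.v i = S.σ i • S.u i := by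
  simp only [sum_mulVec, smul_mulVec, vecMulVec_mulVec, S.dotProduct_v, op_smul_eq_smul,
    ite_smul, one_smul, zero_smul, smul_ite, smul_zero]
  rw [Finset.sum_ite_eq' s i, if_pos hi]

theorem mulVec_v (i : Fin n) : Z *ᵥ S.v i = S.σ i • S.u i := by
  have h := S.sum_smul_vecMulVec_mulVec_v (Finset.mem_univ i)
  rwa [← S.eq_sum] at h

theorem frobSq_sum_smul_vecMulVec (s : Finset (Fin n)) :
    frobSq (∑ i ∈ s, S.σ i • vecMulVec (S.u i) (S.v i)) = ∑ i ∈ s, S.σ i ^ 2 := by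
  rw [frobSq_eq_frobInner, frobInner_sum_smul_vecMulVec]
  refine Finset.sum_congr rfl fun i hi => ?_
  rw [S.sum_smul_vecMulVec_mulVec_v hi, dotProduct_smul, S.dotProduct_u, smul_eq_mul]
  by_cases h : S.σ i = 0 <;> simp [h, sq]

theorem frobSq_eq : frobSq Z = ∑ i, S.σ i ^ 2 := by
  conv_lhs => rw [S.eq_sum]
  exact S.frobSq_sum_smul_vecMulVec Finset.univ

theorem sum_sq_dotProduct_v (x : Fin n → ℝ) : ∑ i, (S.v i ⬝ᵥ x) ^ 2 = x ⬝ᵥ x := by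
  calc ∑ i, (S.v i ⬝ᵥ x) ^ 2 = x ⬝ᵥ ((∑ i, vecMulVec (S.v i) (S.v i)) *ᵥ x) := by
        simp only [sum_mulVec, dotProduct_sum, vecMulVec_mulVec, op_smul_eq_smul, dotProduct_smul,
          smul_eq_mul, sq]
        exact Finset.sum_congr rfl fun i _ => by rw [dotProduct_comm x]
    _ = x ⬝ᵥ x := by rw [sum_vecMulVec_self_eq_one S.v S.dotProduct_v, one_mulVec]

theorem mulVec_dotProduct_self (x : Fin n → ℝ) :
    (Z *ᵥ x) ⬝ᵥ (Z *ᵥ x) = ∑ i, S.σ i ^ 2 * (S.v i ⬝ᵥ x) ^ 2 := by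
  have hZx : Z *ᵥ x = ∑ i, (S.σ i * (S.v i ⬝ᵥ x)) • S.u i := by
    conv_lhs => rw [S.eq_sum]
    simp only [sum_mulVec, smul_mulVec, vecMulVec_mulVec, op_smul_eq_smul, smul_smul]
  simp only [hZx, sum_dotProduct, dotProduct_sum, smul_dotProduct, dotProduct_smul, S.dotProduct_u,
    smul_eq_mul, ite_and, mul_ite, mul_one, mul_zero]
  refine Finset.sum_congr rfl fun i _ => ?_
  by_cases h : S.σ i = 0
  · simp [h]
  · simp [h]
    ring

variable (k : ℕ)

def topProj : Matrix (Fin n) (Fin n) ℝ :=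
  ∑ i ∈ ({i | (i : ℕ) < k} : Finset (Fin n)), vecMulVec (S.v i) (S.v i)

theorem rank_topProj_le : (S.topProj k).rank ≤ k :=
  (Matrix.rank_sum_vecMulVec_le _ _ _).trans (Fin.card_filter_val_lt.trans_le (min_le_right _ _))

theorem mul_topProj :
    Z * S.topProj k =
      ∑ i ∈ ({i | (i : ℕ) < k} : Finset (Fin n)), S.σ i • vecMulVec (S.u i) (S.v i) := by
  simp only [topProj, Matrix.mul_sum, mul_vecMulVec, S.mulVec_v, smul_vecMulVec]

theorem frobSq_sub_mul_topProj :
    frobSq (Z - Z * S.topProj k) = ∑ j ∈ Finset.Icc (k + 1) n, sv Z j ^ 2 := by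
  have h : Z - Z * S.topProj k =
      ∑ i ∈ ({i | ¬(i : ℕ) < k} : Finset (Fin n)), S.σ i • vecMulVec (S.u i) (S.v i) := by
    rw [S.mul_topProj, sub_eq_iff_eq_add', Finset.sum_filter_add_sum_filter_not]
    exact S.eq_sum
  rw [h, S.frobSq_sum_smul_vecMulVec, ← Fin.sum_filter_not_lt_eq_sum_Icc]
  simp only [S.sv_succ]

end SVD

section SingularValues

variable {m n : ℕ}

theorem sv_nonneg (Z : Matrix (Fin m) (Fin n) ℝ) (j : ℕ) : 0 ≤ sv Z j := by
  obtain ⟨S⟩ := SVD.nonempty Z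
  rw [sv, S.svList_eq]
  rcases lt_or_ge (j - 1) n with h | h
  · rw [List.getD_eq_getElem _ _ (by simpa using h), List.getElem_ofFn]
    exact S.nonneg _
  · rw [List.getD_eq_default _ _ (by simpa using h)]

theorem mulVec_dotProduct_self_le (C : Matrix (Fin m) (Fin n) ℝ) (x : Fin n → ℝ) :
    (C *ᵥ x) ⬝ᵥ (C *ᵥ x) ≤ sv C 1 ^ 2 * (x ⬝ᵥ x) := by
  obtain ⟨S⟩ := SVD.nonempty C
  rw [S.mulVec_dotProduct_self, ← S.sum_sq_dotProduct_v, Finset.mul_sum]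
  gcongr with i
  exacts [S.nonneg i, S.le_sv_one i]

theorem dotProduct_le_sqrt_mul_sqrt (x y : Fin n → ℝ) : x ⬝ᵥ y ≤ √(x ⬝ᵥ x) * √(y ⬝ᵥ y) := by
  simpa [dotProduct, sq] using Real.sum_mul_le_sqrt_mul_sqrt Finset.univ x y

theorem dotProduct_mulVec_le (C : Matrix (Fin m) (Fin n) ℝ) (y : Fin m → ℝ) (x : Fin n → ℝ) :
    y ⬝ᵥ (C *ᵥ x) ≤ sv C 1 * (√(y ⬝ᵥ y) * √(x ⬝ᵥ x)) :=
  calc y ⬝ᵥ (C *ᵥ x) ≤ √(y ⬝ᵥ y) * √((C *ᵥ x) ⬝ᵥ (C *ᵥ x)) := dotProduct_le_sqrt_mul_sqrt _ _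
    _ ≤ √(y ⬝ᵥ y) * √(sv C 1 ^ 2 * (x ⬝ᵥ x)) := by gcongr; exact mulVec_dotProduct_self_le C x
    _ = sv C 1 * (√(y ⬝ᵥ y) * √(x ⬝ᵥ x)) := by
      rw [Real.sqrt_mul (sq_nonneg _), Real.sqrt_sq (sv_nonneg C 1)]
      ring

theorem frobInner_le_sv_one_mul_nuclearNorm (C D : Matrix (Fin m) (Fin n) ℝ) :
    frobInner C D ≤ sv C 1 * nuclearNorm D := by
  obtain ⟨S⟩ := SVD.nonempty D
  conv_lhs => rw [S.eq_sum]
  rw [frobInner_sum_smul_vecMulVec, S.nuclearNorm_eq, Finset.mul_sum]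
  refine Finset.sum_le_sum fun i _ => ?_
  rw [mul_comm (sv C 1)]
  refine mul_le_mul_of_nonneg_left ?_ (S.nonneg i)
  have hu : √(S.u i ⬝ᵥ S.u i) ≤ 1 := by
    rw [S.dotProduct_u]
    split_ifs <;> simp
  have hv : √(S.v i ⬝ᵥ S.v i) = 1 := by simp [S.dotProduct_v]
  calc S.u i ⬝ᵥ (C *ᵥ S.v i) ≤ sv C 1 * (√(S.u i ⬝ᵥ S.u i) * √(S.v i ⬝ᵥ S.v i)) :=
        dotProduct_mulVec_le C _ _
    _ ≤ sv C 1 := by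
      rw [hv, mul_one]
      exact mul_le_of_le_one_right (sv_nonneg C 1) hu

theorem nuclearNorm_le_sqrt_rank_mul (D : Matrix (Fin m) (Fin n) ℝ) :
    nuclearNorm D ≤ √D.rank * √(frobSq D) := by
  obtain ⟨S⟩ := SVD.nonempty D
  rw [← Real.sqrt_mul (Nat.cast_nonneg _)]
  refine Real.le_sqrt_of_sq_le ?_
  set supp := Finset.univ.filter fun i => S.σ i ≠ 0
  calc nuclearNorm D ^ 2 = (∑ i ∈ supp, S.σ i) ^ 2 := by
        rw [S.nuclearNorm_eq, Finset.sum_filter_ne_zero]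
    _ ≤ supp.card * ∑ i ∈ supp, S.σ i ^ 2 := sq_sum_le_card_mul_sum_sq (s := supp) (f := S.σ)
    _ ≤ D.rank * frobSq D := by
      rw [S.card_filter_ne_zero_eq_rank, S.frobSq_eq]
      gcongr
      exact Finset.subset_univ supp

end SingularValues

section Estimator

variable {m n p : ℕ}

theorem frobSq_le_add_frobInner_of_frobSq_sub_le {E G T : Matrix (Fin m) (Fin n) ℝ}
    (h : frobSq (E - G) ≤ frobSq (E - T)) : frobSq G ≤ frobSq T + 2 * frobInner E (G - T) := by
  rw [frobSq_sub, frobSq_sub] at h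
  rw [frobInner_sub_right]
  linarith

theorem frobSq_mul_sub_le_of_frobSq_sub_le {k : ℕ} {Y : Matrix (Fin m) (Fin n) ℝ}
    {X : Matrix (Fin m) (Fin p) ℝ} {A B₁ B₂ : Matrix (Fin p) (Fin n) ℝ}
    {P : Matrix (Fin m) (Fin m) ℝ}
    (hPsymm : Pᵀ = P) (hPX : P * X = X) (hB₁ : B₁.rank ≤ k) (hB₂ : B₂.rank ≤ k)
    (h : frobSq (Y - X * B₁) ≤ frobSq (Y - X * B₂)) :
    frobSq (X * B₁ - X * A) ≤ frobSq (X * B₂ - X * A) + 2 * (√(2 * k) * sv (P * (Y - X * A)) 1) *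
      (√(frobSq (X * B₁ - X * A)) + √(frobSq (X * B₂ - X * A))) := by
  have hbasic : frobSq (X * B₁ - X * A) ≤
      frobSq (X * B₂ - X * A) + 2 * frobInner (Y - X * A) (X * (B₁ - B₂)) := by
    have h' := frobSq_le_add_frobInner_of_frobSq_sub_le (E := Y - X * A)
      (G := X * B₁ - X * A) (T := X * B₂ - X * A)
      (by rwa [sub_sub_sub_cancel_right, sub_sub_sub_cancel_right])
    rwa [sub_sub_sub_cancel_right, ← Matrix.mul_sub X B₁ B₂] at h'
  have hrank : (X * (B₁ - B₂)).rank ≤ 2 * k :=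
    calc (X * (B₁ - B₂)).rank ≤ (B₁ - B₂).rank := rank_mul_le_right X (B₁ - B₂)
      _ ≤ B₁.rank + B₂.rank := rank_sub_le B₁ B₂
      _ ≤ 2 * k := by omega
  -- `Y - X A` may be replaced by its projection, as `X (B₁ - B₂)` lies in the column space of `X`.
  have hproj : frobInner (Y - X * A) (X * (B₁ - B₂)) =
      frobInner (P * (Y - X * A)) (X * (B₁ - B₂)) := by
    rw [frobInner_mul_left, hPsymm, ← Matrix.mul_assoc, hPX]
  have hdual : frobInner (Y - X * A) (X * (B₁ - B₂)) ≤
      √(2 * k) * sv (P * (Y - X * A)) 1 * √(frobSq (X * (B₁ - B₂))) :=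
    calc frobInner (Y - X * A) (X * (B₁ - B₂))
        ≤ sv (P * (Y - X * A)) 1 * nuclearNorm (X * (B₁ - B₂)) :=
          hproj ▸ frobInner_le_sv_one_mul_nuclearNorm _ _
      _ ≤ sv (P * (Y - X * A)) 1 * (√(2 * k) * √(frobSq (X * (B₁ - B₂)))) := by
        gcongr
        · exact sv_nonneg _ 1
        · exact (nuclearNorm_le_sqrt_rank_mul _).trans (by gcongr; exact_mod_cast hrank)
      _ = √(2 * k) * sv (P * (Y - X * A)) 1 * √(frobSq (X * (B₁ - B₂))) := by ring
  have htri := sqrt_frobSq_sub_le (X * B₁ - X * A) (X * B₂ - X * A)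
  rw [sub_sub_sub_cancel_right, ← Matrix.mul_sub X B₁ B₂] at htri
  have hsv : 0 ≤ √(2 * k) * sv (P * (Y - X * A)) 1 :=
    mul_nonneg (Real.sqrt_nonneg _) (sv_nonneg _ 1)
  linarith [hdual.trans (mul_le_mul_of_nonneg_left htri hsv)]

theorem sq_le_of_sq_le_sq_add_mul {a b s θ : ℝ} (ha : 0 ≤ a) (hb : 0 ≤ b) (hs : 0 ≤ s)
    (hθ : 0 < θ) (h : a ^ 2 ≤ b ^ 2 + 2 * s * (a + b)) :
    a ^ 2 ≤ (1 + 2 / θ) ^ 2 * b ^ 2 + (1 + θ) * (1 + 2 / θ) * s ^ 2 := by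
  -- `(a - s) ^ 2 ≤ (b + s) ^ 2` gives `a ≤ b + 2 s`; then weighted AM-GM on the cross term `4 b s`.
  have hab : a ≤ b + 2 * s := by nlinarith [sq_nonneg (a - b - 2 * s)]
  have hamgm : θ ^ 2 * (b + 2 * s) ^ 2 ≤ (θ + 2) ^ 2 * b ^ 2 + (1 + θ) * (θ + 2) * θ * s ^ 2 := by
    nlinarith [sq_nonneg (2 * (1 + θ) * b - θ ^ 2 * s),
      mul_nonneg (by positivity : (0 : ℝ) ≤ θ ^ 2 + 2 * θ) (sq_nonneg s)]
  have hrhs : (1 + 2 / θ) ^ 2 * b ^ 2 + (1 + θ) * (1 + 2 / θ) * s ^ 2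
      = ((θ + 2) ^ 2 * b ^ 2 + (1 + θ) * (θ + 2) * θ * s ^ 2) / θ ^ 2 := by
    field_simp
  rw [hrhs, le_div_iff₀ (by positivity)]
  nlinarith [pow_le_pow_left₀ ha hab 2]

end Estimator

theorem restricted_rank_estimator_bound_general {m n p : ℕ}
    (Y : Matrix (Fin m) (Fin n) ℝ) (X : Matrix (Fin m) (Fin p) ℝ)
    (A : Matrix (Fin p) (Fin n) ℝ)
    (P : Matrix (Fin m) (Fin m) ℝ)
    (hPsymm : Pᵀ = P) (hPX : P * X = X)
    (k : ℕ) (Bk : Matrix (Fin p) (Fin n) ℝ) (hBkrank : Bk.rank ≤ k)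
    (hBkmin : ∀ B : Matrix (Fin p) (Fin n) ℝ, B.rank ≤ k →
      frobSq (Y - X * Bk) ≤ frobSq (Y - X * B))
    (θ : ℝ) (hθ : 0 < θ) :
    frobSq (X * Bk - X * A)
      ≤ (1 + 2 / θ) ^ 2 * (∑ j ∈ Finset.Icc (k + 1) n, (sv (X * A) j) ^ 2)
        + 2 * (1 + θ) * (1 + 2 / θ) * k * (sv (P * (Y - X * A)) 1) ^ 2 := by
  obtain ⟨S⟩ := SVD.nonempty (X * A)
  set B := A * S.topProj k
  have hB : B.rank ≤ k := (rank_mul_le_right _ _).trans (S.rank_topProj_le k)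
  have htail : frobSq (X * B - X * A) = ∑ j ∈ Finset.Icc (k + 1) n, sv (X * A) j ^ 2 := by
    rw [frobSq_sub_comm, ← Matrix.mul_assoc, S.frobSq_sub_mul_topProj]
  have h := frobSq_mul_sub_le_of_frobSq_sub_le (A := A) hPsymm hPX hBkrank hB (hBkmin B hB)
  have key := sq_le_of_sq_le_sq_add_mul (a := √(frobSq (X * Bk - X * A)))
    (b := √(frobSq (X * B - X * A))) (Real.sqrt_nonneg _) (Real.sqrt_nonneg _)
    (mul_nonneg (Real.sqrt_nonneg _) (sv_nonneg _ 1)) hθ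
    (by rwa [Real.sq_sqrt (frobSq_nonneg _), Real.sq_sqrt (frobSq_nonneg _)])
  rw [Real.sq_sqrt (frobSq_nonneg _), Real.sq_sqrt (frobSq_nonneg _), htail, mul_pow,
    Real.sq_sqrt (by positivity)] at key
  linarith

/-- Theorem 5 (deterministic form): the restricted-rank least squares estimator B̂_k
satisfies ‖XB̂_k − XA‖_F² ≤ c(θ)²Σ_{j>k}d_j²(XA) + 2(1+θ)c(θ)k d₁²(PE). -/
theorem restricted_rank_estimator_bound {m n p : ℕ}
    (Y : Matrix (Fin m) (Fin n) ℝ) (X : Matrix (Fin m) (Fin p) ℝ)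
    (A : Matrix (Fin p) (Fin n) ℝ)
    (P : Matrix (Fin m) (Fin m) ℝ)
    (hPsymm : Pᵀ = P) (hPidem : P * P = P) (hPX : P * X = X)
    (hPrange : ∀ u : Fin m → ℝ, ∃ w : Fin p → ℝ, P *ᵥ u = X *ᵥ w)
    (k : ℕ) (Bk : Matrix (Fin p) (Fin n) ℝ) (hBkrank : Bk.rank ≤ k)
    (hBkmin : ∀ B : Matrix (Fin p) (Fin n) ℝ, B.rank ≤ k →
      frobSq (Y - X * Bk) ≤ frobSq (Y - X * B))
    (θ : ℝ) (hθ : 0 < θ) :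
    frobSq (X * Bk - X * A)
      ≤ (1 + 2 / θ) ^ 2 * (∑ j ∈ Finset.Icc (k + 1) n, (sv (X * A) j) ^ 2)
        + 2 * (1 + θ) * (1 + 2 / θ) * k * (sv (P * (Y - X * A)) 1) ^ 2 :=
  restricted_rank_estimator_bound_general Y X A P hPsymm hPX k Bk hBkrank hBkmin θ hθ
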